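/- For every n ≥ 1, the number of permutations of {1,…,n} that avoid all three patterns 132, 4321 and 4231 but contain the pattern 321 equals the sum of k² for k from 1 to n−2 (this count is 0 when n ≤ 2). -/

import Mathlib

/-- A Dyck word of semilength `n`, as a list of booleans read left to right,
where `true` is an up-step `U` and `false` is a down-step `D`:
exactly `n` of each letter, and every prefix has at least as many `U`'s as `D`'s. -/
def IsDyckWord (n : ℕ) (w : List Bool) : Prop :=
  w.count true = n ∧ w.count false = n ∧
    ∀ k : ℕ, (w.take k).count false ≤ (w.take k).count true

/-- The number of peaks of a word: positions where a `U` is immediately followed by a `D`. -/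
def numPeaks (w : List Bool) : ℕ := (w.zip w.tail).count (true, false)

/-- The word `U^a D^b`. -/
def upDown (a b : ℕ) : List Bool :=
  List.replicate a true ++ List.replicate b false

/-- A permutation `π` of `{0, …, n-1}` contains the pattern `σ` (a permutation of
`{0, …, m-1}`) if some subsequence of values of `π` is in the same relative order as `σ`. -/
def ContainsPattern {n m : ℕ} (π : Equiv.Perm (Fin n)) (σ : Equiv.Perm (Fin m)) : Prop :=
  ∃ f : Fin m → Fin n, StrictMono f ∧ ∀ a b : Fin m, π (f a) < π (f b) ↔ σ a < σ b

/-- A permutation avoids a pattern if it does not contain it. -/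
def AvoidsPattern {n m : ℕ} (π : Equiv.Perm (Fin n)) (σ : Equiv.Perm (Fin m)) : Prop :=
  ¬ ContainsPattern π σ

/-- The pattern 132 (0-indexed: 021). -/
def pat132 : Equiv.Perm (Fin 3) where
  toFun := ![0, 2, 1]
  invFun := ![0, 2, 1]
  left_inv := by intro x; fin_cases x <;> rfl
  right_inv := by intro x; fin_cases x <;> rfl

/-- The pattern 321 (0-indexed: 210). -/
def pat321 : Equiv.Perm (Fin 3) where
  toFun := ![2, 1, 0]
  invFun := ![2, 1, 0]
  left_inv := by intro x; fin_cases x <;> rfl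
  right_inv := by intro x; fin_cases x <;> rfl

/-- The pattern 4321 (0-indexed: 3210). -/
def pat4321 : Equiv.Perm (Fin 4) where
  toFun := ![3, 2, 1, 0]
  invFun := ![3, 2, 1, 0]
  left_inv := by intro x; fin_cases x <;> rfl
  right_inv := by intro x; fin_cases x <;> rfl

/-- The pattern 4231 (0-indexed: 3120). -/
def pat4231 : Equiv.Perm (Fin 4) where
  toFun := ![3, 1, 2, 0]
  invFun := ![3, 1, 2, 0]
  left_inv := by intro x; fin_cases x <;> rfl
  right_inv := by intro x; fin_cases x <;> rfl

/-- The strictly decreasing pattern `(k+1)k⋯21` of length `k+1`. -/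
def patDesc (k : ℕ) : Equiv.Perm (Fin (k+1)) where
  toFun := Fin.rev
  invFun := Fin.rev
  left_inv := Fin.rev_rev
  right_inv := Fin.rev_rev

/-- `w` has exactly three peaks and, in its (unique) decomposition
`U^{a₁}D^{b₁}U^{a₂}D^{b₂}U^{a₃}D^{b₃}` with all exponents positive,
`a₂ = 1` or `b₂ = 1`. -/
def ThreePeakMiddleOne (w : List Bool) : Prop :=
  numPeaks w = 3 ∧ ∃ a₁ b₁ a₂ b₂ a₃ b₃ : ℕ,
    0 < a₁ ∧ 0 < b₁ ∧ 0 < a₂ ∧ 0 < b₂ ∧ 0 < a₃ ∧ 0 < b₃ ∧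
    w = upDown a₁ b₁ ++ upDown a₂ b₂ ++ upDown a₃ b₃ ∧ (a₂ = 1 ∨ b₂ = 1)

/-- `i` is (the position of) a left-to-right minimum of `π`. -/
def IsLtrMin {n : ℕ} (π : Equiv.Perm (Fin n)) (i : Fin n) : Prop :=
  ∀ j : Fin n, j < i → π i < π j


theorem contains132_iff {n : ℕ} (π : Equiv.Perm (Fin n)) :
    ContainsPattern π pat132 ↔ ∃ i j k : Fin n, i < j ∧ j < k ∧ π i < π k ∧ π k < π j := by
  constructor
  · rintro ⟨f, hf, hord⟩
    exact ⟨f 0, f 1, f 2, hf (by decide), hf (by decide),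
      (hord 0 2).2 (by decide), (hord 2 1).2 (by decide)⟩
  · rintro ⟨i, j, k, hij, hjk, h1, h2⟩
    refine ⟨![i, j, k], ?_, ?_⟩
    · intro a b hab
      fin_cases a <;> fin_cases b <;>
        first
        | exact hij | exact hjk | exact hij.trans hjk
        | exact absurd hab (by decide)
    · intro a b
      fin_cases a <;> fin_cases b <;> constructor <;> intro h <;>
        first
        | decide
        | exact h1 | exact h2 | exact h1.trans h2
        | exact absurd h (by decide)
        | exact absurd h (lt_irrefl _)
        | exact absurd (h1.trans h2) (lt_asymm h)
        | exact absurd h1 (lt_asymm h)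
        | exact absurd h2 (lt_asymm h)


theorem contains321_iff {n : ℕ} (π : Equiv.Perm (Fin n)) :
    ContainsPattern π pat321 ↔ ∃ i j k : Fin n, i < j ∧ j < k ∧ π k < π j ∧ π j < π i := by
  constructor
  · rintro ⟨f, hf, hord⟩
    exact ⟨f 0, f 1, f 2, hf (by decide), hf (by decide),
      (hord 2 1).2 (by decide), (hord 1 0).2 (by decide)⟩
  · rintro ⟨i, j, k, hij, hjk, h1, h2⟩
    refine ⟨![i, j, k], ?_, ?_⟩
    · intro a b hab
      fin_cases a <;> fin_cases b <;>
        first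
        | exact hij | exact hjk | exact hij.trans hjk
        | exact absurd hab (by decide)
    · intro a b
      fin_cases a <;> fin_cases b <;> constructor <;> intro h <;>
        first
        | decide
        | exact h1 | exact h2 | exact h1.trans h2
        | exact absurd h (by decide)
        | exact absurd h (lt_irrefl _)
        | exact absurd (h1.trans h2) (lt_asymm h)
        | exact absurd h1 (lt_asymm h)
        | exact absurd h2 (lt_asymm h)

theorem contains4321_iff {n : ℕ} (π : Equiv.Perm (Fin n)) :
    ContainsPattern π pat4321 ↔ ∃ i j k l : Fin n, i < j ∧ j < k ∧ k < l ∧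
      π l < π k ∧ π k < π j ∧ π j < π i := by
  constructor
  · rintro ⟨f, hf, hord⟩
    exact ⟨f 0, f 1, f 2, f 3, hf (by decide), hf (by decide), hf (by decide),
      (hord 3 2).2 (by decide), (hord 2 1).2 (by decide), (hord 1 0).2 (by decide)⟩
  · rintro ⟨i, j, k, l, hij, hjk, hkl, h1, h2, h3⟩
    refine ⟨![i, j, k, l], ?_, ?_⟩
    · intro a b hab
      fin_cases a <;> fin_cases b <;>
        first
        | exact hij | exact hjk | exact hkl | exact hij.trans hjk
        | exact hjk.trans hkl | exact (hij.trans hjk).trans hkl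
        | exact absurd hab (by decide)
    · intro a b
      fin_cases a <;> fin_cases b <;> constructor <;> intro h <;>
        first
        | decide
        | exact h1 | exact h2 | exact h3
        | exact h1.trans h2 | exact h2.trans h3 | exact (h1.trans h2).trans h3
        | exact absurd h (by decide)
        | exact absurd h (lt_irrefl _)
        | exact absurd h1 (lt_asymm h)
        | exact absurd h2 (lt_asymm h)
        | exact absurd h3 (lt_asymm h)
        | exact absurd (h1.trans h2) (lt_asymm h)
        | exact absurd (h2.trans h3) (lt_asymm h)
        | exact absurd ((h1.trans h2).trans h3) (lt_asymm h)

theorem contains4231_iff {n : ℕ} (π : Equiv.Perm (Fin n)) :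
    ContainsPattern π pat4231 ↔ ∃ i j k l : Fin n, i < j ∧ j < k ∧ k < l ∧
      π l < π j ∧ π j < π k ∧ π k < π i := by
  constructor
  · rintro ⟨f, hf, hord⟩
    exact ⟨f 0, f 1, f 2, f 3, hf (by decide), hf (by decide), hf (by decide),
      (hord 3 1).2 (by decide), (hord 1 2).2 (by decide), (hord 2 0).2 (by decide)⟩
  · rintro ⟨i, j, k, l, hij, hjk, hkl, h1, h2, h3⟩
    refine ⟨![i, j, k, l], ?_, ?_⟩
    · intro a b hab
      fin_cases a <;> fin_cases b <;>
        first
        | exact hij | exact hjk | exact hkl | exact hij.trans hjk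
        | exact hjk.trans hkl | exact (hij.trans hjk).trans hkl
        | exact absurd hab (by decide)
    · intro a b
      fin_cases a <;> fin_cases b <;> constructor <;> intro h <;>
        first
        | decide
        | exact h1 | exact h2 | exact h3
        | exact h2.trans h3 | exact h1.trans h2 | exact (h1.trans h2).trans h3
        | exact absurd h (by decide)
        | exact absurd h (lt_irrefl _)
        | exact absurd h1 (lt_asymm h)
        | exact absurd h2 (lt_asymm h)
        | exact absurd h3 (lt_asymm h)
        | exact absurd (h1.trans h2) (lt_asymm h)
        | exact absurd (h2.trans h3) (lt_asymm h)
        | exact absurd ((h1.trans h2).trans h3) (lt_asymm h)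

/-- Combined: avoiding both 4321 and 4231. -/
theorem avoids43_iff {n : ℕ} (π : Equiv.Perm (Fin n)) :
    (AvoidsPattern π pat4321 ∧ AvoidsPattern π pat4231) ↔
      ∀ i j k l : Fin n, i < j → j < k → k < l →
        ¬(π l < π j ∧ π l < π k ∧ π j < π i ∧ π k < π i) := by
  constructor
  · rintro ⟨h1, h2⟩ i j k l hij hjk hkl ⟨a1, a2, a3, a4⟩
    rcases lt_trichotomy (π j) (π k) with h | h | h
    · exact h2 ((contains4231_iff π).2 ⟨i, j, k, l, hij, hjk, hkl, a1, h, a4⟩)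
    · exact absurd (π.injective h) (Fin.ne_of_lt hjk)
    · exact h1 ((contains4321_iff π).2 ⟨i, j, k, l, hij, hjk, hkl, a2, h, a3⟩)
  · intro H
    constructor
    · intro hc
      obtain ⟨i, j, k, l, hij, hjk, hkl, h1, h2, h3⟩ := (contains4321_iff π).1 hc
      exact H i j k l hij hjk hkl ⟨h1.trans h2, h1, h3, h2.trans h3⟩
    · intro hc
      obtain ⟨i, j, k, l, hij, hjk, hkl, h1, h2, h3⟩ := (contains4231_iff π).1 hc
      exact H i j k l hij hjk hkl ⟨h1, h1.trans h2, h2.trans h3, h3⟩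


/-- The explicit form of the good permutations, as a function on `ℕ`. -/
def fNat (t m p q i : ℕ) : ℕ :=
  if i < p then t + i
  else if i = p then m
  else if i ≤ p + q then t + i - 1
  else if i < p + q + 1 + m then i - (p + q + 1)
  else if i < p + q + t then i - (p + q)
  else i

lemma fNat_spec (t m p q i : ℕ) :
    (i < p ∧ fNat t m p q i = t + i) ∨
    (i = p ∧ fNat t m p q i = m) ∨
    (p < i ∧ i ≤ p + q ∧ fNat t m p q i = t + i - 1) ∨
    (p + q < i ∧ i < p + q + 1 + m ∧ fNat t m p q i = i - (p + q + 1)) ∨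
    (p + q + m < i ∧ i < p + q + t ∧ fNat t m p q i = i - (p + q)) ∨
    (p + q + t ≤ i ∧ fNat t m p q i = i) := by
  unfold fNat
  split_ifs <;> omega

lemma fNat_inj (t m p q : ℕ) (hm : 1 ≤ m) (hmt : m < t) (hp : 1 ≤ p) :
    Function.Injective (fNat t m p q) := by
  intro a b h
  rcases fNat_spec t m p q a with ha|ha|ha|ha|ha|ha <;>
    rcases fNat_spec t m p q b with hb|hb|hb|hb|hb|hb <;> omega

lemma fNat_lt (n t m p q : ℕ) (hmt : m < t) (hb : t + p + q ≤ n) (i : ℕ) (hi : i < n) :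
    fNat t m p q i < n := by
  rcases fNat_spec t m p q i with h|h|h|h|h|h <;> omega

/-- The good permutation built from parameters. -/
noncomputable def permOf (n t m p q : ℕ) (hm : 1 ≤ m) (hmt : m < t) (hp : 1 ≤ p)
    (hb : t + p + q ≤ n) : Equiv.Perm (Fin n) :=
  Equiv.ofBijective (fun i : Fin n => ⟨fNat t m p q i, fNat_lt n t m p q hmt hb i i.2⟩)
    (Finite.injective_iff_bijective.1 (fun a b h => by
      have := fNat_inj t m p q hm hmt hp (congrArg Fin.val h)
      exact Fin.ext this))

lemma permOf_apply (n t m p q : ℕ) (hm : 1 ≤ m) (hmt : m < t) (hp : 1 ≤ p)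
    (hb : t + p + q ≤ n) (i : Fin n) :
    ((permOf n t m p q hm hmt hp hb) i : ℕ) = fNat t m p q i := rfl

lemma permOf_good (n t m p q : ℕ) (hm : 1 ≤ m) (hmt : m < t) (hp : 1 ≤ p)
    (hb : t + p + q ≤ n) (hq : q = 0 ∨ m + 1 = t) :
    AvoidsPattern (permOf n t m p q hm hmt hp hb) pat132 ∧
    AvoidsPattern (permOf n t m p q hm hmt hp hb) pat4321 ∧
    AvoidsPattern (permOf n t m p q hm hmt hp hb) pat4231 ∧
    ContainsPattern (permOf n t m p q hm hmt hp hb) pat321 := by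
  set π := permOf n t m p q hm hmt hp hb with hπ
  have hap : ∀ i : Fin n, (π i : ℕ) = fNat t m p q i :=
    permOf_apply n t m p q hm hmt hp hb
  have h132 : AvoidsPattern π pat132 := by
    intro hc
    obtain ⟨i, j, k, hij, hjk, h1, h2⟩ := (contains132_iff π).1 hc
    rw [Fin.lt_def] at hij hjk h1 h2
    rw [hap i, hap k] at h1
    rw [hap k, hap j] at h2
    have hkn : (k : ℕ) < n := k.2
    rcases fNat_spec t m p q i with hi|hi|hi|hi|hi|hi <;>
      rcases fNat_spec t m p q j with hj|hj|hj|hj|hj|hj <;>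
        rcases fNat_spec t m p q k with hk|hk|hk|hk|hk|hk <;> omega
  have h43 : AvoidsPattern π pat4321 ∧ AvoidsPattern π pat4231 := by
    rw [avoids43_iff]
    intro i j k l hij hjk hkl ⟨a1, a2, a3, a4⟩
    rw [Fin.lt_def] at hij hjk hkl a1 a2 a3 a4
    rw [hap i] at a3 a4
    rw [hap j] at a1 a3
    rw [hap k] at a2 a4
    rw [hap l] at a1 a2
    have hln : (l : ℕ) < n := l.2
    rcases fNat_spec t m p q i with hi|hi|hi|hi|hi|hi <;>
      rcases fNat_spec t m p q j with hj|hj|hj|hj|hj|hj <;>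
        rcases fNat_spec t m p q k with hk|hk|hk|hk|hk|hk <;>
          rcases fNat_spec t m p q l with hl|hl|hl|hl|hl|hl <;> omega
  refine ⟨h132, h43.1, h43.2, ?_⟩
  rw [contains321_iff]
  have h0n : 0 < n := by omega
  have hpn : p < n := by omega
  have hrn : p + q + 1 < n := by omega
  refine ⟨⟨0, h0n⟩, ⟨p, hpn⟩, ⟨p + q + 1, hrn⟩, ?_, ?_, ?_, ?_⟩
  · rw [Fin.lt_def]; exact hp
  · rw [Fin.lt_def]; simp
  · rw [Fin.lt_def, hap, hap]; simp only [Fin.val_mk]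
    rcases fNat_spec t m p q (p + q + 1) with h|h|h|h|h|h <;>
      rcases fNat_spec t m p q p with h'|h'|h'|h'|h'|h' <;> omega
  · rw [Fin.lt_def, hap, hap]; simp only [Fin.val_mk]
    rcases fNat_spec t m p q p with h|h|h|h|h|h <;>
      rcases fNat_spec t m p q 0 with h'|h'|h'|h'|h'|h' <;> omega


/-- Tail formula for positions `≥ r`. -/
def eTail (t m r i : ℕ) : ℕ :=
  if i < r + m then i - r else if i + 1 < r + t then i - r + 1 else i

theorem structure_thm (n : ℕ) (V : ℕ → ℕ)
    (hinj : ∀ a b : ℕ, V a = V b → a = b)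
    (hmap : ∀ i, i < n → V i < n)
    (hsurj : ∀ v, v < n → ∃ i, i < n ∧ V i = v)
    (A132 : ∀ i j k, i < j → j < k → k < n → ¬(V i < V k ∧ V k < V j))
    (A4 : ∀ i j k l, i < j → j < k → k < l → l < n →
      ¬(V l < V j ∧ V l < V k ∧ V j < V i ∧ V k < V i))
    (C321 : ∃ i j k, i < j ∧ j < k ∧ k < n ∧ V k < V j ∧ V j < V i) :
    ∃ t m p q, 1 ≤ m ∧ m < t ∧ 1 ≤ p ∧ t + p + q ≤ n ∧ (q = 0 ∨ m + 1 = t) ∧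
      ∀ i, i < n → V i = fNat t m p q i := by
  obtain ⟨i0, j0, k0, hij0, hjk0, hk0n, hd1, hd2⟩ := C321
  have L1 : ∀ i j k, i < j → j < k → k < n → V k < V j → V k < V i := by
    intro i j k hij hjk hkn hv
    have h := A132 i j k hij hjk hkn
    have hne : V i ≠ V k := fun e => by have := hinj _ _ e; omega
    omega
  have ht0 : V k0 < V 0 := L1 0 j0 k0 (by omega) hjk0 hk0n hd1
  have hPex : ∃ i, i < n ∧ V i < V 0 := ⟨k0, hk0n, ht0⟩
  obtain ⟨p, ⟨hpn, hpv⟩, hpmin⟩ :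
      ∃ p, (p < n ∧ V p < V 0) ∧ ∀ i, i < p → ¬(i < n ∧ V i < V 0) :=
    ⟨Nat.find hPex, Nat.find_spec hPex, fun i hi => Nat.find_min hPex hi⟩
  have hpre_ge : ∀ i, i < p → V 0 ≤ V i := by
    intro i hi
    have h := hpmin i hi
    push_neg at h
    exact h (by omega)
  have hp1 : 1 ≤ p := by
    rcases Nat.eq_zero_or_pos p with h | h
    · rw [h] at hpv; omega
    · exact h
  -- prefix values
  have hpre : ∀ i, i < p → V i = V 0 + i := by
    intro i
    induction i using Nat.strong_induction_on with
    | _ i IH =>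
      intro hip
      rcases Nat.eq_zero_or_pos i with rfl | h0
      · omega
      obtain ⟨i', rfl⟩ : ∃ i', i = i' + 1 := ⟨i - 1, by omega⟩
      have h1 : V i' = V 0 + i' := IH i' (by omega) (by omega)
      have hgt : V i' < V (i' + 1) := by
        have hne : V i' ≠ V (i' + 1) := fun e => by have := hinj _ _ e; omega
        have hge := hpre_ge (i' + 1) hip
        rcases Nat.eq_zero_or_pos i' with rfl | hpos
        · omega
        by_contra hcon
        push_neg at hcon
        have := L1 0 i' (i' + 1) hpos (by omega) (by omega) (by omega)
        omega
      by_contra hne2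
      have hw : V 0 + i' + 1 < V (i' + 1) := by omega
      obtain ⟨l, hln, hl⟩ := hsurj (V 0 + i' + 1)
        (by have := hmap (i' + 1) (by omega); omega)
      have hlne : l ≠ i' + 1 := fun e => by rw [e] at hl; omega
      rcases lt_or_gt_of_ne hlne with hlt | hgt2
      · have := IH l (by omega) (by omega)
        omega
      · exact A132 0 (i' + 1) l (by omega) hgt2 hln ⟨by omega, by omega⟩
  -- m ≥ 1
  have hm1 : 1 ≤ V p := by
    by_contra hcon
    push_neg at hcon
    have hVp : V p = 0 := by omega
    have hinc0 : ∀ a b, p < a → a < b → b < n → V a < V b := by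
      intro a b hpa hab hbn
      have h := A132 p a b hpa hab hbn
      have hVb : V b ≠ 0 := fun e => by
        have := hinj b p (by rw [e, hVp]); omega
      have hne : V a ≠ V b := fun e => by have := hinj _ _ e; omega
      omega
    rcases lt_trichotomy j0 p with h | h | h
    · have e1 := hpre i0 (by omega)
      have e2 := hpre j0 h
      omega
    · rw [h] at hd1; omega
    · have := hinc0 j0 k0 h hjk0 hk0n
      omega
  -- r : position of value 0
  obtain ⟨r, hrn, hr0⟩ := hsurj 0 (by omega)
  have hrp : p < r := by
    have hne : r ≠ p := fun e => by rw [e] at hr0; omega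
    rcases lt_or_gt_of_ne hne with h | h
    · have := hpre_ge r h; omega
    · exact h
  -- increasing after r
  have hinc : ∀ a b, r < a → a < b → b < n → V a < V b := by
    intro a b hra hab hbn
    have h := A132 r a b hra hab hbn
    have hVb : V b ≠ 0 := fun e => by
      have := hinj b r (by rw [e, hr0]); omega
    have hne : V a ≠ V b := fun e => by have := hinj _ _ e; omega
    omega
  -- no low values strictly between p and r
  have hmid_ge : ∀ j, p < j → j < r → V 0 ≤ V j := by
    intro j hpj hjr
    by_contra hcon
    push_neg at hcon
    have h0j : V j ≠ 0 := fun e => by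
      have := hinj j r (by rw [e, hr0]); omega
    exact A4 0 p j r (by omega) hpj hjr hrn
      ⟨by omega, by omega, by omega, by omega⟩
  -- middle values
  have hmid : ∀ j, p < j → j < r → V j = V 0 + j - 1 := by
    intro j
    induction j using Nat.strong_induction_on with
    | _ j IH =>
      intro hpj hjr
      have hjn : j < n := by omega
      have hge : V 0 + j - 1 ≤ V j := by
        by_contra hcon
        push_neg at hcon
        have hge0 := hmid_ge j hpj hjr
        rcases lt_or_ge (V j) (V 0 + p) with hc | hc
        · have hl := hpre (V j - V 0) (by omega)
          have := hinj (V j - V 0) j (by omega)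
          omega
        · have hl := IH (V j - V 0 + 1) (by omega) (by omega) (by omega)
          have := hinj (V j - V 0 + 1) j (by omega)
          omega
      by_contra hne2
      have hw : V 0 + j - 1 < V j := by omega
      obtain ⟨l, hln, hl⟩ := hsurj (V 0 + j - 1) (by have := hmap j hjn; omega)
      have hlne : l ≠ j := fun e => by rw [e] at hl; omega
      rcases lt_or_gt_of_ne hlne with hlt | hgt2
      · rcases lt_trichotomy l p with hc | hc | hc
        · have := hpre l hc; omega
        · rw [hc] at hl; omega
        · have := IH l (by omega) hc (by omega); omega
      · exact A132 0 j l (by omega) hgt2 hln ⟨by omega, by omega⟩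
  -- tail values
  have htail : ∀ i, r ≤ i → i < n → V i = eTail (V 0) (V p) r i := by
    intro i
    induction i using Nat.strong_induction_on with
    | _ i IH =>
      intro hri hin
      rcases Nat.eq_or_lt_of_le hri with he | hri'
      · unfold eTail
        rw [← he] at hin ⊢
        rw [hr0]
        split_ifs <;> omega
      -- i > r now
      have hprev : V (i - 1) = eTail (V 0) (V p) r (i - 1) :=
        IH (i - 1) (by omega) (by omega) (by omega)
      have hgt : V (i - 1) < V i := by
        rcases Nat.eq_or_lt_of_le (show r ≤ i - 1 by omega) with he | h
        · have hz : V (i - 1) = 0 := by rw [← he]; exact hr0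
          have hVi : V i ≠ 0 := fun e => by
            have := hinj i r (by rw [e, hr0]); omega
          omega
        · exact hinc (i - 1) i h (by omega) hin
      have hnem : V i ≠ V p := fun e => by have := hinj _ _ e; omega
      -- hard boundary case
      have hhard : i = r + V 0 - 1 → i ≤ V i := by
        intro he
        by_contra hcon
        push_neg at hcon
        -- every value < i occurs before i
        have hcov : ∃ l, l < i ∧ V l = V i := by
          rcases lt_or_ge (V i) (V p) with hc | hc
          · refine ⟨r + V i, by omega, ?_⟩
            have h := IH (r + V i) (by omega) (by omega) (by omega)
            unfold eTail at h
            split_ifs at h <;> omega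
          rcases Nat.eq_or_lt_of_le hc with hc2 | hc2
          · exact ⟨p, by omega, by omega⟩
          rcases lt_or_ge (V i) (V 0) with hc3 | hc3
          · refine ⟨r + V i - 1, by omega, ?_⟩
            have h := IH (r + V i - 1) (by omega) (by omega) (by omega)
            unfold eTail at h
            split_ifs at h <;> omega
          rcases lt_or_ge (V i) (V 0 + p) with hc4 | hc4
          · refine ⟨V i - V 0, by omega, ?_⟩
            have h := hpre (V i - V 0) (by omega)
            omega
          · refine ⟨V i - V 0 + 1, by omega, ?_⟩
            have h := hmid (V i - V 0 + 1) (by omega) (by omega)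
            omega
        obtain ⟨l, hl1, hl2⟩ := hcov
        have := hinj l i hl2
        omega
      by_cases hcase : i = r + V 0 - 1
      · have h := hhard hcase
        -- upper bound still needed : suppose V i > i
        have hup : V i ≤ i := by
          by_contra hcon
          push_neg at hcon
          obtain ⟨l, hln, hl⟩ := hsurj i (by have := hmap i hin; omega)
          have hlne : l ≠ i := fun e => by rw [e] at hl; omega
          rcases lt_or_gt_of_ne hlne with hlt | hgt2
          · rcases lt_trichotomy l p with hc | hc | hc
            · have := hpre l hc; omega
            · rw [hc] at hl; omega
            · rcases lt_trichotomy l r with hc2 | hc2 | hc2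
              · have := hmid l hc hc2; omega
              · rw [hc2] at hl; omega
              · have hIH := IH l hlt (by omega) (by omega)
                unfold eTail at hIH
                split_ifs at hIH <;> omega
          · have := hinc i l (by omega) hgt2 hln
            omega
        unfold eTail
        split_ifs <;> omega
      -- generic case
      have hlow : eTail (V 0) (V p) r i ≤ V i := by
        unfold eTail at hprev ⊢
        split_ifs at hprev ⊢ <;> omega
      have hup : V i ≤ eTail (V 0) (V p) r i := by
        by_contra hcon
        push_neg at hcon
        obtain ⟨l, hln, hl⟩ := hsurj (eTail (V 0) (V p) r i)
          (by have := hmap i hin; omega)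
        have hlne : l ≠ i := fun e => by
          rw [e] at hl; omega
        rcases lt_or_gt_of_ne hlne with hlt | hgt2
        · rcases lt_trichotomy l p with hc | hc | hc
          · have := hpre l hc
            unfold eTail at hl hcon
            split_ifs at hl hcon <;> omega
          · rw [hc] at hl
            unfold eTail at hl hcon
            split_ifs at hl hcon <;> omega
          · rcases lt_trichotomy l r with hc2 | hc2 | hc2
            · have := hmid l hc hc2
              unfold eTail at hl hcon
              split_ifs at hl hcon <;> omega
            · rw [hc2] at hl
              rw [hr0] at hl
              unfold eTail at hl hcon
              split_ifs at hl hcon <;> omega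
            · have hIH := IH l hlt (by omega) (by omega)
              rw [hIH] at hl
              unfold eTail at hl hcon
              split_ifs at hl hcon <;> omega
        · have := hinc i l (by omega) hgt2 hln
          omega
      omega
  -- the bound t + p + q ≤ n, i.e. r + V 0 - 1 ≤ n
  have hbound : r + V 0 ≤ n + 1 := by
    rcases Nat.lt_or_ge (V 0) 3 with h3 | h3
    · omega
    -- t ≥ 3 : consider w = t-1 or t-2, the largest low value ≠ m
    · by_contra hcon
      push_neg at hcon
      rcases Nat.eq_or_lt_of_le (show V p + 1 ≤ V 0 from hpv) with hc | hc
      · -- m = t - 1 : use w = t - 2, its position is r + t - 2 ≤ n - 1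
        obtain ⟨l, hln, hl⟩ := hsurj (V 0 - 2) (by have := hmap 0 (by omega); omega)
        have h1 : r < l := by
          rcases lt_trichotomy l p with h | h | h
          · have := hpre l h; omega
          · rw [h] at hl; omega
          · rcases lt_trichotomy l r with h2 | h2 | h2
            · have := hmid l h h2; omega
            · rw [h2, hr0] at hl; omega
            · exact h2
        have h2 := htail l (by omega) hln
        unfold eTail at h2
        split_ifs at h2 <;> omega
      · -- m < t - 1 : use w = t - 1
        obtain ⟨l, hln, hl⟩ := hsurj (V 0 - 1) (by have := hmap 0 (by omega); omega)
        have h1 : r < l := by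
          rcases lt_trichotomy l p with h | h | h
          · have := hpre l h; omega
          · rw [h] at hl; omega
          · rcases lt_trichotomy l r with h2 | h2 | h2
            · have := hmid l h h2; omega
            · rw [h2, hr0] at hl; omega
            · exact h2
        have h2 := htail l (by omega) hln
        unfold eTail at h2
        split_ifs at h2 <;> omega
  -- the extra constraint q = 0 ∨ m + 1 = t
  have hconstraint : r = p + 1 ∨ V p + 1 = V 0 := by
    by_contra hcon
    push_neg at hcon
    obtain ⟨hq1, hq2⟩ := hcon
    have hq1' : p + 1 < r := by omega
    have hq2' : V p + 1 < V 0 := by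
      have : V p + 1 ≤ V 0 := hpv
      omega
    have hVp1 : V (p + 1) = V 0 + p := by
      have := hmid (p + 1) (by omega) hq1'
      omega
    -- position of value V 0 - 1
    obtain ⟨l, hln, hl⟩ := hsurj (V 0 - 1) (by have := hmap 0 (by omega); omega)
    have h1 : r < l := by
      rcases lt_trichotomy l p with h | h | h
      · have := hpre l h; omega
      · rw [h] at hl; omega
      · rcases lt_trichotomy l r with h2 | h2 | h2
        · have := hmid l h h2; omega
        · rw [h2, hr0] at hl; omega
        · exact h2
    have h2 := htail l (by omega) hln
    have hlform : l = r + V 0 - 2 := by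
      unfold eTail at h2
      split_ifs at h2 <;> omega
    exact A132 p (p + 1) l (by omega) (by omega) hln ⟨by omega, by omega⟩
  -- assemble
  refine ⟨V 0, V p, p, r - p - 1, hm1, hpv, hp1, by omega, by omega, ?_⟩
  intro i hin
  have hs := fNat_spec (V 0) (V p) p (r - p - 1) i
  rcases lt_trichotomy i p with h | h | h
  · have := hpre i h; omega
  · subst h; omega
  · rcases lt_trichotomy i r with h2 | h2 | h2
    · have := hmid i h h2; omega
    · have h3 := htail i (by omega) hin
      unfold eTail at h3
      split_ifs at h3 <;> omega
    · have h3 := htail i (by omega) hin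
      unfold eTail at h3
      split_ifs at h3 <;> omega


def IsGood {n : ℕ} (π : Equiv.Perm (Fin n)) : Prop :=
  AvoidsPattern π pat132 ∧ AvoidsPattern π pat4321 ∧ AvoidsPattern π pat4231 ∧
    ContainsPattern π pat321

theorem good_implies_form {n : ℕ} (π : Equiv.Perm (Fin n)) (hg : IsGood π) :
    ∃ t m p q, 1 ≤ m ∧ m < t ∧ 1 ≤ p ∧ t + p + q ≤ n ∧ (q = 0 ∨ m + 1 = t) ∧
      ∀ i : Fin n, (π i : ℕ) = fNat t m p q i := by
  obtain ⟨h1, h2, h3, h4⟩ := hg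
  set V : ℕ → ℕ := fun i => if h : i < n then (π ⟨i, h⟩ : ℕ) else i with hV
  have hVlt : ∀ (i : ℕ) (h : i < n), V i = (π ⟨i, h⟩ : ℕ) := fun i h => dif_pos h
  have hVge : ∀ i : ℕ, ¬ i < n → V i = i := fun i h => dif_neg h
  have hmain : ∃ t m p q, 1 ≤ m ∧ m < t ∧ 1 ≤ p ∧ t + p + q ≤ n ∧ (q = 0 ∨ m + 1 = t) ∧
      ∀ i, i < n → V i = fNat t m p q i := by
    apply structure_thm
    · -- injective
      intro a b hab
      by_cases ha : a < n <;> by_cases hb : b < n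
      · rw [hVlt a ha, hVlt b hb] at hab
        exact congrArg Fin.val (π.injective (Fin.ext hab))
      · rw [hVlt a ha, hVge b hb] at hab
        have := (π ⟨a, ha⟩).2
        omega
      · rw [hVge a ha, hVlt b hb] at hab
        have := (π ⟨b, hb⟩).2
        omega
      · rw [hVge a ha, hVge b hb] at hab
        exact hab
    · intro i h
      rw [hVlt i h]
      exact (π ⟨i, h⟩).2
    · intro v hv
      refine ⟨(π.symm ⟨v, hv⟩ : ℕ), (π.symm ⟨v, hv⟩).2, ?_⟩
      rw [hVlt _ (π.symm ⟨v, hv⟩).2]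
      exact congrArg Fin.val (π.apply_symm_apply ⟨v, hv⟩)
    · intro i j k hij hjk hkn ⟨c1, c2⟩
      apply h1
      rw [contains132_iff]
      refine ⟨⟨i, by omega⟩, ⟨j, by omega⟩, ⟨k, hkn⟩, ?_, ?_, ?_, ?_⟩
      · exact Fin.mk_lt_mk.2 hij
      · exact Fin.mk_lt_mk.2 hjk
      · rw [Fin.lt_def, ← hVlt i (by omega), ← hVlt k hkn]; exact c1
      · rw [Fin.lt_def, ← hVlt k hkn, ← hVlt j (by omega)]; exact c2
    · intro i j k l hij hjk hkl hln ⟨c1, c2, c3, c4⟩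
      refine (avoids43_iff π).1 ⟨h2, h3⟩ ⟨i, by omega⟩ ⟨j, by omega⟩ ⟨k, by omega⟩
        ⟨l, hln⟩ (Fin.mk_lt_mk.2 hij) (Fin.mk_lt_mk.2 hjk) (Fin.mk_lt_mk.2 hkl)
        ⟨?_, ?_, ?_, ?_⟩ <;> rw [Fin.lt_def]
      · rw [← hVlt l hln, ← hVlt j (by omega)]; exact c1
      · rw [← hVlt l hln, ← hVlt k (by omega)]; exact c2
      · rw [← hVlt j (by omega), ← hVlt i (by omega)]; exact c3
      · rw [← hVlt k (by omega), ← hVlt i (by omega)]; exact c4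
    · obtain ⟨i, j, k, hij, hjk, hv1, hv2⟩ := (contains321_iff π).1 h4
      refine ⟨i, j, k, hij, hjk, k.2, ?_, ?_⟩
      · rw [hVlt _ k.2, hVlt _ j.2]
        exact hv1
      · rw [hVlt _ j.2, hVlt _ i.2]
        exact hv2
  obtain ⟨t, m, p, q, c1, c2, c3, c4, c5, hform⟩ := hmain
  refine ⟨t, m, p, q, c1, c2, c3, c4, c5, fun i => ?_⟩
  have := hform i.1 i.2
  rwa [hVlt _ i.2] at this

/-- Unconditional wrapper. -/
noncomputable def permOf' (n t m p q : ℕ) : Equiv.Perm (Fin n) :=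
  if h : 1 ≤ m ∧ m < t ∧ 1 ≤ p ∧ t + p + q ≤ n then
    permOf n t m p q h.1 h.2.1 h.2.2.1 h.2.2.2 else 1

lemma permOf'_eq (n t m p q : ℕ) (hm : 1 ≤ m) (hmt : m < t) (hp : 1 ≤ p)
    (hb : t + p + q ≤ n) :
    permOf' n t m p q = permOf n t m p q hm hmt hp hb := dif_pos ⟨hm, hmt, hp, hb⟩

lemma permOf'_apply (n t m p q : ℕ) (hm : 1 ≤ m) (hmt : m < t) (hp : 1 ≤ p)
    (hb : t + p + q ≤ n) (i : Fin n) :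
    ((permOf' n t m p q) i : ℕ) = fNat t m p q i := by
  rw [permOf'_eq n t m p q hm hmt hp hb]
  exact permOf_apply n t m p q hm hmt hp hb i

lemma permOf'_inj {n t1 m1 p1 q1 t2 m2 p2 q2 : ℕ}
    (a1 : 1 ≤ m1) (a2 : m1 < t1) (a3 : 1 ≤ p1) (a4 : t1 + p1 + q1 ≤ n)
    (b1 : 1 ≤ m2) (b2 : m2 < t2) (b3 : 1 ≤ p2) (b4 : t2 + p2 + q2 ≤ n)
    (heq : permOf' n t1 m1 p1 q1 = permOf' n t2 m2 p2 q2) :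
    t1 = t2 ∧ m1 = m2 ∧ p1 = p2 ∧ q1 = q2 := by
  have hF : ∀ i, i < n → fNat t1 m1 p1 q1 i = fNat t2 m2 p2 q2 i := by
    intro i hi
    have := congrArg (fun e : Equiv.Perm (Fin n) => (e ⟨i, hi⟩ : ℕ)) heq
    rwa [permOf'_apply n t1 m1 p1 q1 a1 a2 a3 a4, permOf'_apply n t2 m2 p2 q2 b1 b2 b3 b4]
      at this
  have h0 := hF 0 (by omega)
  have s10 := fNat_spec t1 m1 p1 q1 0
  have s20 := fNat_spec t2 m2 p2 q2 0
  have ht : t1 = t2 := by omega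
  have hp1 := hF p1 (by omega)
  have hp2 := hF p2 (by omega)
  have s1p1 := fNat_spec t1 m1 p1 q1 p1
  have s2p1 := fNat_spec t2 m2 p2 q2 p1
  have s1p2 := fNat_spec t1 m1 p1 q1 p2
  have s2p2 := fNat_spec t2 m2 p2 q2 p2
  have hpm : p1 = p2 ∧ m1 = m2 := by omega
  have hq1 := hF (p1 + q1 + 1) (by omega)
  have hq2 := hF (p2 + q2 + 1) (by omega)
  have s1q1 := fNat_spec t1 m1 p1 q1 (p1 + q1 + 1)
  have s2q1 := fNat_spec t2 m2 p2 q2 (p1 + q1 + 1)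
  have s1q2 := fNat_spec t1 m1 p1 q1 (p2 + q2 + 1)
  have s2q2 := fNat_spec t2 m2 p2 q2 (p2 + q2 + 1)
  refine ⟨ht, hpm.2, hpm.1, by omega⟩

/-- perm from a triple `(k, a, b)`. -/
noncomputable def mkPerm (n k a b : ℕ) : Equiv.Perm (Fin n) :=
  if b ≤ a then permOf' n (a + 1) b (k + 1 - a) 0 else permOf' n (a + 1) a (k + 1 - b) (b - a)

lemma mkPerm_good (n k a b : ℕ) (h1 : 1 ≤ a) (h2 : a ≤ k) (h3 : 1 ≤ b) (h4 : b ≤ k)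
    (h5 : k + 2 ≤ n) : IsGood (mkPerm n k a b) := by
  unfold mkPerm
  split_ifs with hba
  · rw [permOf'_eq n (a + 1) b (k + 1 - a) 0 (by omega) (by omega) (by omega) (by omega)]
    exact permOf_good n (a + 1) b (k + 1 - a) 0 (by omega) (by omega) (by omega) (by omega)
      (Or.inl rfl)
  · rw [permOf'_eq n (a + 1) a (k + 1 - b) (b - a) (by omega) (by omega) (by omega) (by omega)]
    exact permOf_good n (a + 1) a (k + 1 - b) (b - a) (by omega) (by omega) (by omega)
      (by omega) (Or.inr rfl)

/-- The parameter Finset. -/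
def paramSet (n : ℕ) : Finset ((_ : ℕ) × ℕ × ℕ) :=
  (Finset.Icc 1 (n - 2)).sigma fun k => Finset.Icc 1 k ×ˢ Finset.Icc 1 k

lemma mem_paramSet (n : ℕ) (x : (_ : ℕ) × ℕ × ℕ) :
    x ∈ paramSet n ↔ 1 ≤ x.1 ∧ x.1 ≤ n - 2 ∧ 1 ≤ x.2.1 ∧ x.2.1 ≤ x.1 ∧
      1 ≤ x.2.2 ∧ x.2.2 ≤ x.1 := by
  unfold paramSet
  rw [Finset.mem_sigma, Finset.mem_product, Finset.mem_Icc, Finset.mem_Icc, Finset.mem_Icc]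
  tauto

lemma mem_paramSet' (n k a b : ℕ) :
    (⟨k, a, b⟩ : (_ : ℕ) × ℕ × ℕ) ∈ paramSet n ↔ 1 ≤ k ∧ k ≤ n - 2 ∧ 1 ≤ a ∧ a ≤ k ∧
      1 ≤ b ∧ b ≤ k := mem_paramSet n ⟨k, a, b⟩

lemma paramSet_card (n : ℕ) : (paramSet n).card = ∑ k ∈ Finset.Icc 1 (n - 2), k ^ 2 := by
  unfold paramSet
  rw [Finset.card_sigma]
  refine Finset.sum_congr rfl fun k _ => ?_
  rw [Finset.card_product, Nat.card_Icc, sq]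
  simp

theorem main_count (n : ℕ) :
    Nat.card {π : Equiv.Perm (Fin n) // IsGood π} = ∑ k ∈ Finset.Icc 1 (n - 2), k ^ 2 := by
  classical
  have hbij : Function.Bijective
      (fun x : {x : (_ : ℕ) × ℕ × ℕ // x ∈ paramSet n} =>
        (⟨mkPerm n x.1.1 x.1.2.1 x.1.2.2, by
          obtain ⟨h1, h2, h3, h4, h5, h6⟩ := (mem_paramSet n x.1).1 x.2
          exact mkPerm_good n x.1.1 x.1.2.1 x.1.2.2 h3 h4 h5 h6 (by omega)⟩ :
          {π : Equiv.Perm (Fin n) // IsGood π})) := by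
    constructor
    · rintro ⟨⟨k1, a1, b1⟩, hx1⟩ ⟨⟨k2, a2, b2⟩, hx2⟩ he
      simp only [Subtype.mk.injEq] at he
      obtain ⟨c1, c2, c3, c4, c5, c6⟩ := (mem_paramSet' n k1 a1 b1).1 hx1
      obtain ⟨d1, d2, d3, d4, d5, d6⟩ := (mem_paramSet' n k2 a2 b2).1 hx2
      unfold mkPerm at he
      have : k1 = k2 ∧ a1 = a2 ∧ b1 = b2 := by
        split_ifs at he with hba1 hba2 hba2
        · have := permOf'_inj (n := n) (by omega) (by omega) (by omega) (by omega)
            (by omega) (by omega) (by omega) (by omega) he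
          omega
        · have := permOf'_inj (n := n) (by omega) (by omega) (by omega) (by omega)
            (by omega) (by omega) (by omega) (by omega) he
          omega
        · have := permOf'_inj (n := n) (by omega) (by omega) (by omega) (by omega)
            (by omega) (by omega) (by omega) (by omega) he
          omega
        · have := permOf'_inj (n := n) (by omega) (by omega) (by omega) (by omega)
            (by omega) (by omega) (by omega) (by omega) he
          omega
      obtain ⟨rfl, rfl, rfl⟩ := this
      rfl
    · rintro ⟨π, hgood⟩
      obtain ⟨t, m, p, q, c1, c2, c3, c4, c5, hform⟩ := good_implies_form π hgood
      by_cases hq0 : q = 0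
      · subst hq0
        refine ⟨⟨⟨t + p - 2, t - 1, m⟩, ?_⟩, ?_⟩
        · rw [mem_paramSet']
          omega
        · apply Subtype.ext
          simp only
          have hmk : mkPerm n (t + p - 2) (t - 1) m = permOf' n t m p 0 := by
            unfold mkPerm
            rw [if_pos (by omega)]
            congr 1 <;> omega
          rw [hmk]
          apply Equiv.ext
          intro i
          apply Fin.ext
          rw [permOf'_apply n t m p 0 c1 c2 c3 c4 i]
          exact (hform i).symm
      · have hc : m + 1 = t := c5.resolve_left hq0
        refine ⟨⟨⟨t + p + q - 2, t - 1, t - 1 + q⟩, ?_⟩, ?_⟩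
        · rw [mem_paramSet']
          omega
        · apply Subtype.ext
          simp only
          have hmk : mkPerm n (t + p + q - 2) (t - 1) (t - 1 + q) = permOf' n t m p q := by
            unfold mkPerm
            rw [if_neg (by omega)]
            congr 1 <;> omega
          rw [hmk]
          apply Equiv.ext
          intro i
          apply Fin.ext
          rw [permOf'_apply n t m p q c1 c2 c3 c4 i]
          exact (hform i).symm
  calc Nat.card {π : Equiv.Perm (Fin n) // IsGood π}
      = Nat.card {x : (_ : ℕ) × ℕ × ℕ // x ∈ paramSet n} :=
        (Nat.card_congr (Equiv.ofBijective _ hbij)).symm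
    _ = (paramSet n).card := by
        rw [Nat.card_eq_fintype_card, Fintype.card_coe]
    _ = ∑ k ∈ Finset.Icc 1 (n - 2), k ^ 2 := paramSet_card n


/-- For every `n ≥ 1`, the number of permutations of `{1, …, n}` that avoid all
of 132, 4321 and 4231 but contain 321 equals `∑_{k=1}^{n-2} k²`. -/
theorem strict_shod_perm_count (n : ℕ) (hn : 1 ≤ n) :
    Nat.card {π : Equiv.Perm (Fin n) //
        AvoidsPattern π pat132 ∧ AvoidsPattern π pat4321 ∧ AvoidsPattern π pat4231 ∧
          ContainsPattern π pat321} =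
      ∑ k ∈ Finset.Icc 1 (n - 2), k ^ 2 :=
  main_count n
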